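/- arXiv:2007.06430 — 6 statements merged into one kernel-verified Lean document; each statement's English description precedes it below -/
import Mathlib

section
/- Let 𝒜 be a countable subset of SL(2,ℝ) whose generated semigroup 𝒜* is not discrete in SL(2,ℝ) (i.e. 𝒜* has an accumulation point in SL(2,ℝ)). Then for every s > 0 the series ζ_𝒜(s) = ∑_{n≥1} ∑_{A ∈ 𝒜^n} ‖A‖^{-2s} diverges; in particular the critical exponent δ_𝒜 = inf{s > 0 : ζ_𝒜(s) < ∞} is infinite. -/
open Matrix

abbrev SL2 := Matrix.SpecialLinearGroup (Fin 2) ℝ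

/-- The operator norm of a 2x2 real matrix, acting on Euclidean `ℝ²`. -/
noncomputable def matNorm (A : Matrix (Fin 2) (Fin 2) ℝ) : ℝ :=
  ‖LinearMap.toContinuousLinearMap (Matrix.toEuclideanLin A)‖

instance : TopologicalSpace SL2 :=
  TopologicalSpace.induced (fun A => (A : Matrix (Fin 2) (Fin 2) ℝ)) inferInstance

/-- Product of the word `l` under the letter assignment `A`. -/
def wordProd {ι : Type*} (A : ι → SL2) (l : List ι) : SL2 := (l.map A).prod

/-- The zeta function `ζ_𝒜(s) = ∑_{n≥1} ∑_{A ∈ 𝒜ⁿ} ‖A‖^{-2s}`, the sum ranging over all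
nonempty words over the alphabet `ι` (valued in `ℝ≥0∞` so divergence is value `⊤`). -/
noncomputable def zeta {ι : Type*} (A : ι → SL2) (s : ℝ) : ENNReal :=
  ∑' l : {l : List ι // l ≠ []}, ENNReal.ofReal (matNorm (wordProd A l.1) ^ (-2 * s))

/-- The critical exponent `δ_𝒜 = inf {s > 0 : ζ_𝒜(s) < ∞}` (equal to `⊤` if the zeta
function always diverges). -/
noncomputable def deltaOf {ι : Type*} (A : ι → SL2) : ENNReal :=
  ⨅ s : {s : ℝ // 0 < s ∧ zeta A s < ⊤}, ENNReal.ofReal s.1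

/-!
If `ζ_𝒜(s)` converged for some `s > 0`, its terms `‖w‖^{-2s}` would tend to zero along the
cofinite filter, so only finitely many words `w` would have norm at most `C`, for every `C`.
Since every element of `𝒜*` is the product of a nonempty word, each sublevel set
`{g ∈ 𝒜* | ‖g‖ ≤ C}` would be finite. But the sublevel set `{‖g‖ < ‖x‖ + 1}` is a
neighbourhood of the accumulation point `x`, so it contains infinitely many points of `𝒜*`.
-/

open Filter Topology

theorem Summable.finite_setOf_le_of_rpow {α : Type*} {f : α → ℝ} (hf : ∀ a, 0 < f a)
    {r : ℝ} (hr : r < 0) (hs : Summable fun a => f a ^ r) (C : ℝ) : {a | f a ≤ C}.Finite := by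
  set D := max C 1
  have hD : 0 < D ^ r := Real.rpow_pos_of_pos (lt_max_of_lt_right one_pos) r
  have hsmall : {a | D ^ r ≤ f a ^ r}.Finite := by
    simpa only [not_lt] using
      eventually_cofinite.mp (hs.tendsto_cofinite_zero.eventually (gt_mem_nhds hD))
  exact hsmall.subset fun a (ha : f a ≤ C) =>
    Real.rpow_le_rpow_of_nonpos (hf a) (ha.trans (le_max_left C 1)) hr.le

theorem not_accPt_of_finite_sublevels {X : Type*} [TopologicalSpace X] [T1Space X] {f : X → ℝ}
    (hf : Continuous f) {S : Set X} (hS : ∀ C, (S ∩ {y | f y ≤ C}).Finite) (x : X) :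
    ¬ AccPt x (𝓟 S) := fun hx =>
  have hU := (isOpen_lt hf continuous_const).mem_nhds (lt_add_one (f x))
  Set.Infinite.of_accPt (hx.nhds_inter hU)
    ((hS (f x + 1)).subset fun _ ⟨(hyU : f _ < f x + 1), hyS⟩ => ⟨hyS, hyU.le⟩)

theorem exists_wordProd_eq_of_mem_closure {ι : Type*} (A : ι → SL2) {g : SL2}
    (hg : g ∈ Subsemigroup.closure (Set.range A)) :
    ∃ l : List ι, l ≠ [] ∧ wordProd A l = g := by
  induction hg using Subsemigroup.closure_induction with
  | mem g hg =>
    obtain ⟨i, rfl⟩ := hg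
    exact ⟨[i], List.cons_ne_nil i [], by simp [wordProd]⟩
  | mul a b _ _ ha hb =>
    obtain ⟨l₁, hl₁, rfl⟩ := ha
    obtain ⟨l₂, -, rfl⟩ := hb
    exact ⟨l₁ ++ l₂, by simp [hl₁], by simp [wordProd]⟩

theorem SL2.isEmbedding_coe : IsEmbedding (fun g : SL2 => (g : Matrix (Fin 2) (Fin 2) ℝ)) :=
  ⟨⟨rfl⟩, Subtype.val_injective⟩

instance : T2Space SL2 := SL2.isEmbedding_coe.t2Space

theorem continuous_matNorm : Continuous matNorm :=
  continuous_norm.comp <| LinearMap.continuous_of_finiteDimensional <|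
    LinearMap.toContinuousLinearMap.toLinearMap ∘ₗ
      (Matrix.toEuclideanLin (𝕜 := ℝ) (m := Fin 2) (n := Fin 2)).toLinearMap

theorem SL2.matNorm_pos (g : SL2) : 0 < matNorm g := by
  rw [matNorm, norm_pos_iff]
  intro h0
  rw [LinearEquiv.map_eq_zero_iff, LinearEquiv.map_eq_zero_iff] at h0
  simpa [h0] using g.2

theorem summable_of_zeta_lt_top {ι : Type*} (A : ι → SL2) {s : ℝ} (hs : zeta A s < ⊤) :
    Summable fun l : {l : List ι // l ≠ []} =>
      matNorm ((wordProd A l.1 : SL2) : Matrix (Fin 2) (Fin 2) ℝ) ^ (-2 * s) :=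
  (ENNReal.summable_toReal hs.ne).congr fun _ =>
    ENNReal.toReal_ofReal (Real.rpow_nonneg (norm_nonneg _) _)

theorem stmt1_general {ι : Type*} (A : ι → SL2)
    (h : ∃ x : SL2, AccPt x (Filter.principal
      (Subsemigroup.closure (Set.range A) : Set SL2))) :
    (∀ s : ℝ, 0 < s →
      ¬ Summable (fun l : {l : List ι // l ≠ []} =>
        matNorm ((wordProd A l.1 : SL2) : Matrix (Fin 2) (Fin 2) ℝ) ^ (-2 * s))) ∧
    deltaOf A = ⊤ := by
  obtain ⟨x, hx⟩ := h
  have divergent : ∀ s : ℝ, 0 < s →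
      ¬ Summable (fun l : {l : List ι // l ≠ []} =>
        matNorm ((wordProd A l.1 : SL2) : Matrix (Fin 2) (Fin 2) ℝ) ^ (-2 * s)) := by
    intro s hs hsum
    refine not_accPt_of_finite_sublevels
      (continuous_matNorm.comp SL2.isEmbedding_coe.continuous) (fun C => ?_) x hx
    refine ((hsum.finite_setOf_le_of_rpow (fun l => SL2.matNorm_pos _) (by linarith) C).image
      fun l => wordProd A l.1).subset ?_
    rintro g ⟨hg, hgC⟩
    obtain ⟨l, hl, rfl⟩ := exists_wordProd_eq_of_mem_closure A hg
    exact ⟨⟨l, hl⟩, hgC, rfl⟩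
  refine ⟨divergent, ?_⟩
  have : IsEmpty {s : ℝ // 0 < s ∧ zeta A s < ⊤} :=
    ⟨fun ⟨s, hs, hζ⟩ => divergent s hs (summable_of_zeta_lt_top A hζ)⟩
  rw [deltaOf, iInf_of_empty]

/-- If the semigroup generated by a countable `𝒜 ⊆ SL(2,ℝ)` is not discrete (it has an
accumulation point in `SL(2,ℝ)`), then for every `s > 0` the zeta series
`∑_{n≥1} ∑_{A ∈ 𝒜ⁿ} ‖A‖^{-2s}` diverges (so the critical exponent `δ_𝒜` is infinite). -/
theorem stmt1 {ι : Type*} [Countable ι] (A : ι → SL2)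
    (h : ∃ x : SL2, AccPt x (Filter.principal
      (Subsemigroup.closure (Set.range A) : Set SL2))) :
    (∀ s : ℝ, 0 < s →
      ¬ Summable (fun l : {l : List ι // l ≠ []} =>
        matNorm ((wordProd A l.1 : SL2) : Matrix (Fin 2) (Fin 2) ℝ) ^ (-2 * s))) ∧
    deltaOf A = ⊤ :=
  stmt1_general A h
end

section
/- Let A = diag(λ, 1/λ) with 0 < λ < 1 and B = (1,1;0,1) in SL(2,ℝ), and let 𝒜 = {A, B}. Then the critical exponent δ_𝒜 = inf{s > 0 : ∑_{n≥1} ∑_{C ∈ 𝒜^n} ‖C‖^{-2s} < ∞} satisfies δ_𝒜 ≥ 1. (Here ‖·‖ is the maximum-entry norm.) -/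
open Matrix

/-- The maximum-entry norm of a 2x2 real matrix. -/
def maxNorm (M : Matrix (Fin 2) (Fin 2) ℝ) : ℝ :=
  max (max |M 0 0| |M 0 1|) (max |M 1 0| |M 1 1|)

/-!
The words `Bᵃ A Bᵇ` (`a, b ≥ 0`) are pairwise distinct, and their product
`!![λ, λ b + a / λ; 0, 1 / λ]` has maximum-entry norm at most `(λ + 1 / λ) (a + b + 1)`.
So the zeta series dominates a multiple of `∑_{a,b} (a + b + 1)^{-2s}`; grouping the terms by
`n = a + b` turns this into `∑ₙ (n + 1)^{1-2s}`, which diverges for `s ≤ 1`.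
-/

theorem unitriangular_pow {R : Type*} [CommRing R] (n : ℕ) :
    (!![1, 1; 0, 1] : Matrix (Fin 2) (Fin 2) R) ^ n = !![1, (n : R); 0, 1] := by
  induction n with
  | zero => simp [Matrix.one_fin_two]
  | succ n ih => rw [pow_succ, ih, Matrix.mul_fin_two]; simp [add_comm]

/-- The word `Bᵃ A Bᵇ`, with `true` standing for `A` and `false` for `B`. -/
def sandwichWord (a b : ℕ) : List Bool :=
  List.replicate a false ++ true :: List.replicate b false

theorem sandwichWord_ne_nil (a b : ℕ) : sandwichWord a b ≠ [] := by
  simp [sandwichWord]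

theorem sandwichWord_injective : Function.Injective fun p : ℕ × ℕ => sandwichWord p.1 p.2 := by
  rintro ⟨a, b⟩ ⟨a', b'⟩ h
  have ha : a = a' := by
    simpa [sandwichWord, List.idxOf_append] using congrArg (List.idxOf true) h
  have hl := congrArg List.length h
  simp only [sandwichWord, List.length_append, List.length_replicate, List.length_cons] at hl
  simp only [Prod.mk.injEq]; omega

theorem wordProd_sandwichWord (f : Bool → SL2) (a b : ℕ) :
    wordProd f (sandwichWord a b) = f false ^ a * f true * f false ^ b := by
  simp [wordProd, sandwichWord, mul_assoc]

theorem coe_wordProd_sandwichWord {lam : ℝ} {A B : SL2}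
    (hA : (A : Matrix (Fin 2) (Fin 2) ℝ) = !![lam, 0; 0, lam⁻¹])
    (hB : (B : Matrix (Fin 2) (Fin 2) ℝ) = !![1, 1; 0, 1]) (a b : ℕ) :
    (wordProd (fun i : Bool => if i then A else B) (sandwichWord a b) :
      Matrix (Fin 2) (Fin 2) ℝ) = !![lam, lam * b + a * lam⁻¹; 0, lam⁻¹] := by
  simp only [wordProd_sandwichWord, ↓reduceIte, Bool.false_eq_true,
    Matrix.SpecialLinearGroup.coe_mul, Matrix.SpecialLinearGroup.coe_pow, hA, hB,
    unitriangular_pow, Matrix.mul_fin_two]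
  simp

theorem abs_le_maxNorm (M : Matrix (Fin 2) (Fin 2) ℝ) (i j : Fin 2) : |M i j| ≤ maxNorm M := by
  fin_cases i <;> fin_cases j <;> simp [maxNorm]

theorem maxNorm_sandwich_le {lam : ℝ} (hl : 0 < lam) (a b : ℕ) :
    maxNorm !![lam, lam * b + a * lam⁻¹; 0, lam⁻¹] ≤ (lam + lam⁻¹) * (a + b + 1) := by
  have hil : 0 < lam⁻¹ := inv_pos.mpr hl
  have ha : (0 : ℝ) ≤ a := a.cast_nonneg
  have hb : (0 : ℝ) ≤ b := b.cast_nonneg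
  simp only [maxNorm, Matrix.of_apply, Matrix.cons_val', Matrix.cons_val_zero, Matrix.cons_val_one,
    abs_of_pos hl, abs_of_pos hil, abs_zero,
    abs_of_nonneg (by positivity : 0 ≤ lam * b + a * lam⁻¹)]
  refine max_le (max_le ?_ ?_) (max_le ?_ ?_) <;> nlinarith

open Finset in
theorem not_summable_add_add_one_rpow_neg {t : ℝ} (ht : t ≤ 2) :
    ¬ Summable (fun p : ℕ × ℕ => ((p.1 + p.2 + 1 : ℕ) : ℝ) ^ (-t)) := by
  intro h
  have hfiber (n : ℕ) : ∑' p : antidiagonal n, ((p.1.1 + p.1.2 + 1 : ℕ) : ℝ) ^ (-t) =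
      ((n + 1 : ℕ) : ℝ) ^ (1 - t) := by
    have hp (p : antidiagonal n) : p.1.1 + p.1.2 = n := mem_antidiagonal.mp p.2
    simp only [hp, tsum_fintype, sum_const, card_univ, Fintype.card_coe, Nat.card_antidiagonal,
      nsmul_eq_mul]
    rw [sub_eq_add_neg, Real.rpow_add (by positivity), Real.rpow_one]
  have hsigma := ((summable_sigma_of_nonneg fun _ => Real.rpow_nonneg (Nat.cast_nonneg _) _).mp
    (HasAntidiagonal.sigmaAntidiagonalEquivProd.summable_iff.mpr h)).2
  simp only [HasAntidiagonal.sigmaAntidiagonalEquivProd_apply, hfiber] at hsigma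
  have := Real.summable_nat_rpow.mp ((summable_nat_add_iff 1).mp hsigma)
  linarith

theorem rpow_neg_le_maxNorm_sandwich_rpow_neg {lam t : ℝ} (hl : 0 < lam) (ht : 0 ≤ t)
    (a b : ℕ) :
    ((lam + lam⁻¹) * (a + b + 1)) ^ (-t) ≤
      maxNorm !![lam, lam * b + a * lam⁻¹; 0, lam⁻¹] ^ (-t) := by
  have hpos : 0 < maxNorm !![lam, lam * b + a * lam⁻¹; 0, lam⁻¹] := by
    refine (inv_pos.mpr hl).trans_le ?_
    simpa [abs_of_pos hl] using abs_le_maxNorm !![lam, lam * b + a * lam⁻¹; 0, lam⁻¹] 1 1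
  exact Real.rpow_le_rpow_of_nonpos hpos (maxNorm_sandwich_le hl a b) (neg_nonpos.mpr ht)

theorem stmt3_general (lam : ℝ) (hl0 : 0 < lam) (A B : SL2)
    (hA : (A : Matrix (Fin 2) (Fin 2) ℝ) = !![lam, 0; 0, lam⁻¹])
    (hB : (B : Matrix (Fin 2) (Fin 2) ℝ) = !![1, 1; 0, 1]) :
    ∀ s : ℝ, 0 < s → s < 1 →
      ¬ Summable (fun l : {l : List Bool // l ≠ []} =>
        maxNorm ((wordProd (fun i : Bool => if i then A else B) l.1 : SL2) :
          Matrix (Fin 2) (Fin 2) ℝ) ^ (-2 * s)) := by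
  intro s hs0 hs1 hsum
  have hsandwich := hsum.comp_injective (i := fun p : ℕ × ℕ =>
    ⟨sandwichWord p.1 p.2, sandwichWord_ne_nil p.1 p.2⟩)
    fun p q h => sandwichWord_injective (congrArg Subtype.val h)
  have hfamily : Summable fun p : ℕ × ℕ =>
      (lam + lam⁻¹) ^ (-(2 * s)) * ((p.1 + p.2 + 1 : ℕ) : ℝ) ^ (-(2 * s)) := by
    refine hsandwich.of_nonneg_of_le (fun _ => by positivity) fun ⟨a, b⟩ => ?_
    rw [← Real.mul_rpow (by positivity) (by positivity), Function.comp_apply,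
      coe_wordProd_sandwichWord hA hB, neg_mul]
    push_cast
    exact rpow_neg_le_maxNorm_sandwich_rpow_neg hl0 (by positivity) a b
  exact not_summable_add_add_one_rpow_neg (by linarith)
    ((summable_mul_left_iff (by positivity)).mp hfamily)

/-- For `𝒜 = {A, B}` with `A = diag(λ, 1/λ)`, `0 < λ < 1`, and `B = (1,1;0,1)`, the
critical exponent satisfies `δ_𝒜 ≥ 1`: for every `0 < s < 1` the zeta series
`∑_{n≥1} ∑_{C ∈ 𝒜ⁿ} ‖C‖^{-2s}` (over words, maximum-entry norm) diverges. -/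
theorem stmt3 (lam : ℝ) (hl0 : 0 < lam) (hl1 : lam < 1) (A B : SL2)
    (hA : (A : Matrix (Fin 2) (Fin 2) ℝ) = !![lam, 0; 0, lam⁻¹])
    (hB : (B : Matrix (Fin 2) (Fin 2) ℝ) = !![1, 1; 0, 1]) :
    ∀ s : ℝ, 0 < s → s < 1 →
      ¬ Summable (fun l : {l : List Bool // l ≠ []} =>
        maxNorm ((wordProd (fun i : Bool => if i then A else B) l.1 : SL2) :
          Matrix (Fin 2) (Fin 2) ℝ) ^ (-2 * s)) :=
  stmt3_general lam hl0 A B hA hB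
end

section
/- Let A, B ∈ SL(2,ℝ) be parabolic matrices (|tr| = 2, not ±Id) whose induced Möbius maps on the extended real line have distinct fixed points. Then there exist positive integers n, m such that A^n B^m is hyperbolic, i.e. |tr(A^n B^m)| > 2. -/
open Matrix

lemma nil_sq (N : Matrix (Fin 2) (Fin 2) ℝ) (h1 : N.trace = 0) (h2 : N.det = 0) :
    N * N = 0 := by
  simp [Matrix.trace_fin_two] at h1
  simp [Matrix.det_fin_two] at h2
  ext i j
  fin_cases i <;> fin_cases j <;> simp [Matrix.mul_apply, Fin.sum_univ_two]
  · linear_combination N 0 0 * h1 - h2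
  · linear_combination N 0 1 * h1
  · linear_combination N 1 0 * h1
  · linear_combination N 1 1 * h1 - h2

lemma anticomm (N M : Matrix (Fin 2) (Fin 2) ℝ) (hN : N.trace = 0) (hM : M.trace = 0)
    (h : (N * M).trace = 0) : N * M + M * N = 0 := by
  simp [Matrix.trace_fin_two] at hN hM
  simp [Matrix.trace_fin_two, Matrix.mul_apply, Fin.sum_univ_two] at h
  ext i j
  fin_cases i <;> fin_cases j <;> simp [Matrix.mul_apply, Fin.sum_univ_two]
  · linear_combination h + M 0 0 * hN - N 1 1 * hM
  · linear_combination M 0 1 * hN + N 0 1 * hM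
  · linear_combination M 1 0 * hN + N 1 0 * hM
  · linear_combination h + M 1 1 * hN - N 0 0 * hM

lemma exists_mulVec_ne (M : Matrix (Fin 2) (Fin 2) ℝ) (h : M ≠ 0) :
    ∃ v : Fin 2 → ℝ, M *ᵥ v ≠ 0 := by
  by_contra hc
  push_neg at hc
  apply h
  ext i j
  have := congrFun (hc (Pi.single j 1)) i
  simpa [Matrix.mulVec_single] using this



lemma parab (A : SL2) (hA1 : A ≠ 1) (hA2 : A ≠ -1)
    (htr : |Matrix.trace (A : Matrix (Fin 2) (Fin 2) ℝ)| = 2) :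
    ∃ (e : ℝ) (N : Matrix (Fin 2) (Fin 2) ℝ), (e = 1 ∨ e = -1) ∧ N ≠ 0 ∧ N * N = 0 ∧
      N.trace = 0 ∧ (A : Matrix (Fin 2) (Fin 2) ℝ) = e • (1 + N) := by
  have hdet : (A : Matrix (Fin 2) (Fin 2) ℝ).det = 1 := A.2
  rcases abs_eq (by norm_num : (0:ℝ) ≤ 2) |>.mp htr with ht | ht
  · refine ⟨1, (A : Matrix (Fin 2) (Fin 2) ℝ) - 1, Or.inl rfl, ?_, ?_, ?_, by simp⟩
    · intro h
      exact hA1 (Subtype.coe_injective (by simpa [sub_eq_zero] using h))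
    · apply nil_sq
      · simp [Matrix.trace_sub, ht]
      · simp only [Matrix.det_fin_two, Matrix.sub_apply, Matrix.one_apply] at *
        have ht' := ht
        rw [Matrix.trace_fin_two] at ht'
        simp at *
        linear_combination hdet - ht'
    · simp [Matrix.trace_sub, ht]
  · refine ⟨-1, -(A : Matrix (Fin 2) (Fin 2) ℝ) - 1, Or.inr rfl, ?_, ?_, ?_, by simp⟩
    · intro h
      apply hA2
      apply Subtype.coe_injective
      have h2 : -(A : Matrix (Fin 2) (Fin 2) ℝ) = 1 := sub_eq_zero.mp h
      have : (A : Matrix (Fin 2) (Fin 2) ℝ) = -1 := by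
        rw [← h2]; simp
      simpa using this
    · apply nil_sq
      · simp [Matrix.trace_sub, ht]
      · simp only [Matrix.det_fin_two, Matrix.sub_apply, Matrix.neg_apply,
          Matrix.one_apply] at *
        have ht' := ht
        rw [Matrix.trace_fin_two] at ht'
        simp at *
        linear_combination hdet + ht'
    · simp [Matrix.trace_sub, ht]

lemma pow_one_add (N : Matrix (Fin 2) (Fin 2) ℝ) (hN : N * N = 0) (k : ℕ) :
    (1 + N) ^ k = 1 + (k : ℝ) • N := by
  induction k with
  | zero => simp
  | succ k ih =>
    rw [pow_succ, ih]
    push_cast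
    rw [add_mul, one_mul, mul_add, mul_one, Matrix.smul_mul, hN]
    simp [add_smul]
    abel

/-- If `A, B ∈ SL(2,ℝ)` are parabolic with distinct fixed points on `ℝ ∪ {∞}`
(equivalently: they have no common real eigenvector, fixed points of the Möbius maps
corresponding to invariant directions), then some `AⁿBᵐ` (`n, m ≥ 1`) is hyperbolic. -/
theorem stmt4 (A B : SL2)
    (hA1 : A ≠ 1) (hA2 : A ≠ -1)
    (htrA : |Matrix.trace (A : Matrix (Fin 2) (Fin 2) ℝ)| = 2)
    (hB1 : B ≠ 1) (hB2 : B ≠ -1)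
    (htrB : |Matrix.trace (B : Matrix (Fin 2) (Fin 2) ℝ)| = 2)
    (hfix : ¬ ∃ v : Fin 2 → ℝ, v ≠ 0 ∧
      (∃ a : ℝ, (A : Matrix (Fin 2) (Fin 2) ℝ) *ᵥ v = a • v) ∧
      (∃ b : ℝ, (B : Matrix (Fin 2) (Fin 2) ℝ) *ᵥ v = b • v)) :
    ∃ n m : ℕ, 0 < n ∧ 0 < m ∧
      |Matrix.trace ((A ^ n * B ^ m : SL2) : Matrix (Fin 2) (Fin 2) ℝ)| > 2 := by
  obtain ⟨e, N, he, hN0, hNsq, hNtr, hAe⟩ := parab A hA1 hA2 htrA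
  obtain ⟨d, M, hd, hM0, hMsq, hMtr, hBd⟩ := parab B hB1 hB2 htrB
  set τ := (N * M).trace with hτdef
  have habs_e : |e| = 1 := by rcases he with h|h <;> simp [h]
  have habs_d : |d| = 1 := by rcases hd with h|h <;> simp [h]
  have hτ0 : τ ≠ 0 := by
    intro h0
    have hac := anticomm N M hNtr hMtr h0
    have hMN : M * N = -(N * M) := by
      have := hac
      rw [add_comm] at this
      exact eq_neg_of_add_eq_zero_left this
    have key : ∃ w : Fin 2 → ℝ, w ≠ 0 ∧ N *ᵥ w = 0 ∧ M *ᵥ w = 0 := by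
      by_cases hNM : N * M = 0
      · obtain ⟨v, hv⟩ := exists_mulVec_ne M hM0
        refine ⟨M *ᵥ v, hv, ?_, ?_⟩
        · rw [Matrix.mulVec_mulVec, hNM, Matrix.zero_mulVec]
        · rw [Matrix.mulVec_mulVec, hMsq, Matrix.zero_mulVec]
      · obtain ⟨v, hv⟩ := exists_mulVec_ne (N * M) hNM
        refine ⟨(N * M) *ᵥ v, hv, ?_, ?_⟩
        · rw [Matrix.mulVec_mulVec, ← Matrix.mul_assoc, hNsq, Matrix.zero_mul,
            Matrix.zero_mulVec]
        · rw [Matrix.mulVec_mulVec, ← Matrix.mul_assoc, hMN, neg_mul,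
            Matrix.mul_assoc, hMsq, Matrix.mul_zero, neg_zero, Matrix.zero_mulVec]
    obtain ⟨w, hw, hNw, hMw⟩ := key
    apply hfix
    refine ⟨w, hw, ⟨e, ?_⟩, ⟨d, ?_⟩⟩
    · rw [hAe, Matrix.smul_mulVec, Matrix.add_mulVec, Matrix.one_mulVec, hNw]
      simp
    · rw [hBd, Matrix.smul_mulVec, Matrix.add_mulVec, Matrix.one_mulVec, hMw]
      simp
  have key : ∀ n m : ℕ, Matrix.trace ((A ^ n * B ^ m : SL2) : Matrix (Fin 2) (Fin 2) ℝ)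
      = e ^ n * d ^ m * (2 + (n : ℝ) * (m : ℝ) * τ) := by
    intro n m
    rw [Matrix.SpecialLinearGroup.coe_mul, Matrix.SpecialLinearGroup.coe_pow,
      Matrix.SpecialLinearGroup.coe_pow, hAe, hBd, smul_pow, smul_pow,
      pow_one_add N hNsq, pow_one_add M hMsq, smul_mul_smul_comm]
    rw [add_mul, one_mul, mul_add, mul_one, Matrix.smul_mul, Matrix.mul_smul, smul_smul]
    simp only [Matrix.trace_smul, Matrix.trace_add, Matrix.trace_one, Matrix.trace_smul,
      hNtr, hMtr, ← hτdef]
    simp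
    try ring
  obtain ⟨k, hk⟩ := exists_nat_gt (4 / |τ|)
  refine ⟨k + 1, k + 1, Nat.succ_pos _, Nat.succ_pos _, ?_⟩
  rw [key]
  have hτpos : 0 < |τ| := abs_pos.mpr hτ0
  have h4 : 4 < ((k : ℝ) + 1) * ((k : ℝ) + 1) * |τ| := by
    rw [div_lt_iff₀ hτpos] at hk
    nlinarith [Nat.cast_nonneg (α := ℝ) k, hτpos]
  set c : ℝ := ((k + 1 : ℕ) : ℝ) with hc
  have hcpos : 0 < c := by positivity
  have hcc : 4 < c * c * |τ| := by
    rw [hc]; push_cast; convert h4 using 2 <;> push_cast <;> ring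
  have habs : |c * c * τ| = c * c * |τ| := by
    rw [abs_mul, abs_of_nonneg (by positivity : (0:ℝ) ≤ c * c)]
  have htri : |c * c * τ| ≤ |2 + c * c * τ| + 2 := by
    have := abs_sub (2 + c * c * τ) 2
    calc |c * c * τ| = |(2 + c * c * τ) - 2| := by ring_nf
      _ ≤ |2 + c * c * τ| + |2| := abs_sub _ _
      _ = |2 + c * c * τ| + 2 := by norm_num
  rw [abs_mul, abs_mul, abs_pow, abs_pow, habs_e, habs_d]
  simp only [one_pow, one_mul]
  linarith [habs ▸ htri, hcc]
end

section
/- Let K ⊆ ℝ² be a multicone and K' ⊆ ℝ² a multicone compactly contained in K. Then there exists c > 0 such that for every A ∈ SL(2,ℝ) with A(K) ⊆ K' and every nonzero w ∈ K', one has ‖Aw‖ ≥ c·‖A‖·‖w‖. -/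
open Matrix

abbrev V2 := EuclideanSpace ℝ (Fin 2)

/-- An open convex cone in `ℝ²`: `{x v₁ + y v₂ : x, y > 0}` for linearly independent
`v₁, v₂`. -/
def IsCone (C : Set V2) : Prop :=
  ∃ v₁ v₂ : V2, LinearIndependent ℝ ![v₁, v₂] ∧
    C = {w | ∃ x y : ℝ, 0 < x ∧ 0 < y ∧ w = x • v₁ + y • v₂}

/-- A multicone in `ℝ²`: a finite union of cones with pairwise disjoint closures. -/
def IsMulticone (K : Set V2) : Prop :=
  ∃ (n : ℕ) (C : Fin n → Set V2), (∀ i, IsCone (C i)) ∧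
    (Pairwise fun i j => Disjoint (closure (C i)) (closure (C j))) ∧
    K = ⋃ i, C i

/-- The linear action of `A ∈ SL(2,ℝ)` on Euclidean `ℝ²`. -/
noncomputable def linAct (A : SL2) : V2 →ₗ[ℝ] V2 :=
  Matrix.toEuclideanLin (A : Matrix (Fin 2) (Fin 2) ℝ)

/-!
Each cone of a multicone is salient: its vectors have positive coordinates in some basis, so
`‖x‖ + ‖y‖ ≤ L ‖x + y‖` for `x, y` in one cone. As the cones are open with disjoint closures, a
segment inside the multicone lies in a single cone, so the inequality holds for the endpoints
of every segment in `K'`. Since the unit vectors of `closure K'` form a compact subset of the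
open set `K`, there is `δ > 0` such that `z ± δu ∈ K` for all unit `z ∈ K'` and unit `u`. Then
`A(z ± δu)` span a segment in `K'`, whence `2δ‖Au‖ ≤ ‖A(z + δu)‖ + ‖A(z - δu)‖ ≤ 2L‖Az‖`, that
is, `‖A‖ ≤ (L / δ) ‖Az‖`.
-/

open Metric Function

theorem IsPreconnected.exists_subset_of_subset_iUnion {α ι : Type*} [TopologicalSpace α]
    {s : Set α} {U : ι → Set α} (hs : IsPreconnected s) (hne : s.Nonempty)
    (hU : ∀ i, IsOpen (U i)) (hdisj : Pairwise (Disjoint on U)) (hsU : s ⊆ ⋃ i, U i) :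
    ∃ i, s ⊆ U i := by
  obtain ⟨x, hx⟩ := hne
  obtain ⟨i, hi⟩ := Set.mem_iUnion.1 (hsU hx)
  refine ⟨i, hs.subset_left_of_subset_union (hU i) (isOpen_biUnion fun j _ => hU j)
    (Set.disjoint_iUnion₂_right.2 fun j hj => hdisj (Ne.symm hj)) ?_ ⟨x, hx, hi⟩⟩
  intro y hy
  obtain ⟨j, hj⟩ := Set.mem_iUnion.1 (hsU hy)
  rcases eq_or_ne j i with rfl | hji
  · exact Or.inl hj
  · exact Or.inr (Set.mem_biUnion (x := j) hji hj)

section NormedSpace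

variable {E F : Type*} [NormedAddCommGroup E] [NormedSpace ℝ E]
  [NormedAddCommGroup F] [NormedSpace ℝ F]

theorem norm_add_norm_le_of_le_mul_apply {C : Set E} (φ : E →L[ℝ] ℝ) {M : ℝ} (hM : 0 ≤ M)
    (hC : ∀ x ∈ C, ‖x‖ ≤ M * φ x) {x y : E} (hx : x ∈ C) (hy : y ∈ C) :
    ‖x‖ + ‖y‖ ≤ M * ‖φ‖ * ‖x + y‖ :=
  calc ‖x‖ + ‖y‖ ≤ M * φ (x + y) := by
        rw [map_add, mul_add]; exact add_le_add (hC x hx) (hC y hy)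
    _ ≤ M * (‖φ‖ * ‖x + y‖) := by
        gcongr; exact (le_abs_self _).trans (φ.le_opNorm _)
    _ = M * ‖φ‖ * ‖x + y‖ := (mul_assoc _ _ _).symm

namespace Module.Basis

variable {ι : Type*} [Fintype ι] (b : Basis ι ℝ E)

theorem isOpen_setOf_forall_repr_pos : IsOpen {x | ∀ i, 0 < b.repr x i} := by
  have := b.finiteDimensional_of_finite
  simp only [Set.ofPred_forall]
  exact isOpen_iInter_of_finite fun i =>
    isOpen_lt continuous_const (b.coord i).continuous_of_finiteDimensional

theorem exists_norm_add_norm_le :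
    ∃ L, ∀ x ∈ {x | ∀ i, 0 < b.repr x i}, ∀ y ∈ {x | ∀ i, 0 < b.repr x i},
      ‖x‖ + ‖y‖ ≤ L * ‖x + y‖ := by
  have := b.finiteDimensional_of_finite
  set M := ∑ i, ‖b i‖
  let φ : E →L[ℝ] ℝ := LinearMap.toContinuousLinearMap (∑ i, b.coord i)
  have hφ : ∀ x ∈ {x | ∀ i, 0 < b.repr x i}, ‖x‖ ≤ M * φ x := by
    intro x hx
    calc ‖x‖ = ‖∑ i, b.repr x i • b i‖ := by rw [b.sum_repr]
      _ ≤ ∑ i, b.repr x i * ‖b i‖ := by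
          refine (norm_sum_le _ _).trans (Finset.sum_le_sum fun i _ => ?_)
          rw [_root_.norm_smul, Real.norm_of_nonneg (hx i).le]
      _ ≤ ∑ i, b.repr x i * M := Finset.sum_le_sum fun i _ =>
          mul_le_mul_of_nonneg_left
            (Finset.single_le_sum (fun j _ => norm_nonneg (b j)) (Finset.mem_univ i)) (hx i).le
      _ = M * φ x := by simp [φ, Finset.sum_mul, mul_comm]
  exact ⟨M * ‖φ‖, fun x hx y hy =>
    norm_add_norm_le_of_le_mul_apply φ (by positivity) hφ hx hy⟩

end Module.Basis

theorem ContinuousLinearMap.opNorm_le_of_norm_add_norm_le {T : E →L[ℝ] F} {z : E} {δ L : ℝ}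
    (hδ : 0 < δ) (hL : 0 ≤ L)
    (h : ∀ u : E, ‖u‖ = 1 →
      ‖T (z + δ • u)‖ + ‖T (z - δ • u)‖ ≤ L * ‖T (z + δ • u) + T (z - δ • u)‖) :
    ‖T‖ ≤ L / δ * ‖T z‖ := by
  refine opNorm_le_of_unit_norm (by positivity) fun u hu => ?_
  rw [div_mul_eq_mul_div, le_div_iff₀ hδ]
  have hsub : T (z + δ • u) - T (z - δ • u) = (2 * δ) • T u := by
    rw [← map_sub, add_sub_sub_cancel, ← two_smul ℝ, smul_smul, map_smul]
  have hadd : T (z + δ • u) + T (z - δ • u) = (2 : ℝ) • T z := by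
    rw [← map_add, add_add_sub_cancel, ← two_smul ℝ, map_smul]
  have := (norm_sub_le _ _).trans (h u hu)
  rw [hsub, hadd, norm_smul, norm_smul, Real.norm_of_nonneg (by positivity),
    Real.norm_two] at this
  linarith

end NormedSpace

theorem IsCone.exists_basis {C : Set V2} (h : IsCone C) :
    ∃ b : Module.Basis (Fin 2) ℝ V2, C = {x | ∀ i, 0 < b.repr x i} := by
  obtain ⟨v₁, v₂, hli, rfl⟩ := h
  have hcard : Fintype.card (Fin 2) = Module.finrank ℝ V2 := by simp
  let b := basisOfLinearIndependentOfCardEqFinrank hli hcard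
  have hb : ⇑b = ![v₁, v₂] := coe_basisOfLinearIndependentOfCardEqFinrank hli hcard
  have hb0 : v₁ = b 0 := by simp [hb]
  have hb1 : v₂ = b 1 := by simp [hb]
  refine ⟨b, Set.ext fun x => ⟨?_, fun hx => ⟨_, _, hx 0, hx 1, ?_⟩⟩⟩
  · rintro ⟨s, t, hs, ht, rfl⟩ i
    fin_cases i <;> simp [hb0, hb1, hs, ht]
  · rw [hb0, hb1, ← Fin.sum_univ_two (fun i => b.repr x i • b i), b.sum_repr]

theorem IsCone.isOpen {C : Set V2} (h : IsCone C) : IsOpen C := by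
  obtain ⟨b, rfl⟩ := h.exists_basis
  exact b.isOpen_setOf_forall_repr_pos

theorem IsCone.smul_mem {C : Set V2} (h : IsCone C) {r : ℝ} (hr : 0 < r) {x : V2}
    (hx : x ∈ C) : r • x ∈ C := by
  obtain ⟨b, rfl⟩ := h.exists_basis
  intro i
  simpa using mul_pos hr (hx i)

theorem IsCone.exists_norm_add_norm_le {C : Set V2} (h : IsCone C) :
    ∃ L, ∀ x ∈ C, ∀ y ∈ C, ‖x‖ + ‖y‖ ≤ L * ‖x + y‖ := by
  obtain ⟨b, rfl⟩ := h.exists_basis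
  exact b.exists_norm_add_norm_le

theorem IsMulticone.isOpen {K : Set V2} (h : IsMulticone K) : IsOpen K := by
  obtain ⟨n, C, hC, -, rfl⟩ := h
  exact isOpen_iUnion fun i => (hC i).isOpen

theorem IsMulticone.smul_mem {K : Set V2} (h : IsMulticone K) {r : ℝ} (hr : 0 < r) {x : V2}
    (hx : x ∈ K) : r • x ∈ K := by
  obtain ⟨n, C, hC, -, rfl⟩ := h
  obtain ⟨i, hi⟩ := Set.mem_iUnion.1 hx
  exact Set.mem_iUnion.2 ⟨i, (hC i).smul_mem hr hi⟩

theorem IsMulticone.exists_norm_add_norm_le_of_segment_subset {K : Set V2}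
    (h : IsMulticone K) :
    ∃ L, 0 < L ∧ ∀ x y, segment ℝ x y ⊆ K → ‖x‖ + ‖y‖ ≤ L * ‖x + y‖ := by
  obtain ⟨n, C, hC, hdisj, rfl⟩ := h
  choose L hL using fun i => (hC i).exists_norm_add_norm_le
  obtain ⟨L₀, hL₀⟩ := Finite.exists_le L
  refine ⟨max L₀ 1, by positivity, fun x y hxy => ?_⟩
  obtain ⟨i, hi⟩ := (convex_segment x y).isPreconnected.exists_subset_of_subset_iUnion
    ⟨x, left_mem_segment ℝ x y⟩ (fun i => (hC i).isOpen)
    (fun i j hij => (hdisj hij).mono subset_closure subset_closure) hxy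
  calc ‖x‖ + ‖y‖ ≤ L i * ‖x + y‖ :=
        hL i x (hi (left_mem_segment ℝ x y)) y (hi (right_mem_segment ℝ x y))
    _ ≤ max L₀ 1 * ‖x + y‖ := by gcongr; exact (hL₀ i).trans (le_max_left _ _)

/-- If `K` is a multicone and `K'` a multicone compactly contained in `K`, then there is
`c > 0` such that for every `A ∈ SL(2,ℝ)` with `A(K) ⊆ K'` and every nonzero `w ∈ K'`,
`‖Aw‖ ≥ c‖A‖‖w‖`. -/
theorem stmt6 (K K' : Set V2) (hK : IsMulticone K) (hK' : IsMulticone K')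
    (hcc : closure K' \ {0} ⊆ K) :
    ∃ c : ℝ, 0 < c ∧ ∀ A : SL2, Set.MapsTo (linAct A) K K' →
      ∀ w ∈ K', w ≠ 0 →
        ‖linAct A w‖ ≥ c * matNorm (A : Matrix (Fin 2) (Fin 2) ℝ) * ‖w‖ := by
  obtain ⟨L, hL, hLK'⟩ := hK'.exists_norm_add_norm_le_of_segment_subset
  obtain ⟨δ, hδ, hδK⟩ := ((isCompact_sphere (0 : V2) 1).inter_right isClosed_closure)
    |>.exists_cthickening_subset_open hK.isOpen
      fun z hz => hcc ⟨hz.2, ne_of_mem_sphere hz.1 one_ne_zero⟩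
  refine ⟨δ / L, by positivity, fun A hA w hw hw0 => ?_⟩
  set T := LinearMap.toContinuousLinearMap (linAct A)
  set z := ‖w‖⁻¹ • w
  have hz : z ∈ sphere 0 1 ∩ closure K' :=
    ⟨mem_sphere_zero_iff_norm.2 (norm_smul_inv_norm hw0),
      subset_closure (hK'.smul_mem (by positivity) hw)⟩
  have hTw : ‖linAct A w‖ = ‖w‖ * ‖T z‖ := by
    change ‖T w‖ = _
    rw [map_smul, norm_smul, norm_inv, norm_norm, mul_inv_cancel_left₀ (norm_ne_zero_iff.2 hw0)]
  have hnorm : ‖T‖ ≤ L / δ * ‖T z‖ := by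
    refine T.opNorm_le_of_norm_add_norm_le hδ hL.le fun u hu => hLK' _ _ ?_
    refine (image_segment ℝ (linAct A).toAffineMap _ _).superset.trans
      (hA.mono_left ?_).image_subset
    refine ((convex_closedBall z δ).segment_subset ?_ ?_).trans
      ((closedBall_subset_cthickening hz δ).trans hδK) <;>
    simp [dist_eq_norm, norm_smul, hu, abs_of_pos hδ]
  calc δ / L * matNorm (A : Matrix (Fin 2) (Fin 2) ℝ) * ‖w‖
      ≤ δ / L * (L / δ * ‖T z‖) * ‖w‖ := by gcongr; exact hnorm
    _ = ‖linAct A w‖ := by rw [hTw]; field_simp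
end

section
/- Let 𝒜 be a finite subset of SL(2,ℝ) that is uniformly hyperbolic. Then every matrix in the generated semigroup 𝒜* is hyperbolic, i.e. |tr(A)| > 2 for every A ∈ 𝒜*. -/
open Matrix

/-!
If `|tr A| ≤ 2` for some `A ∈ 𝒜*`, then Cayley–Hamilton `A² = (tr A) A - 1` gives
`Aⁿ = Sₙ₋₁(tr A) A - Sₙ₋₂(tr A)` with the rescaled Chebyshev polynomials `Sₙ`, which are bounded
by `n + 1` on `[-2, 2]`; so `‖Aⁿ‖` grows at most linearly. But `Aⁿ` is the product of a word of
length at least `n` over `𝒜`, so uniform hyperbolicity forces `‖Aⁿ‖ ≥ c λⁿ`.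
-/

open Filter Asymptotics Polynomial

namespace Polynomial.Chebyshev

/-- The invariant `Sₙ² + Sₙ₊₁² - t Sₙ Sₙ₊₁ = 1` forces `||Sₙ₊₁(t)| - |Sₙ(t)|| ≤ 1` when
`|t| ≤ 2`. -/
theorem abs_eval_S_le {t : ℝ} (ht : |t| ≤ 2) {n : ℤ} (hn : -1 ≤ n) :
    |(S ℝ n).eval t| ≤ n + 1 := by
  induction n, hn using Int.leInduction with
  | base => simp
  | succ n _ ih =>
    set a := (S ℝ n).eval t
    set b := (S ℝ (n + 1)).eval t
    have hinv : a ^ 2 + b ^ 2 - t * a * b = 1 := by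
      simpa using congrArg (eval t) (S_sq_add_S_sq ℝ n)
    have hab : t * a * b ≤ 2 * |a| * |b| :=
      calc t * a * b ≤ |t * a * b| := le_abs_self _
        _ = |t| * |a| * |b| := by rw [abs_mul, abs_mul]
        _ ≤ 2 * |a| * |b| := by gcongr
    have hdiff : (|b| - |a|) ^ 2 ≤ 1 := by nlinarith [sq_abs a, sq_abs b]
    push_cast
    nlinarith [abs_nonneg a, abs_nonneg b]

theorem pow_eq_eval_S_smul_sub {K R : Type*} [CommRing K] [Ring R] [Algebra K R] {x : R} {t : K}
    (hx : x * x = t • x - 1) (n : ℕ) :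
    x ^ n = (S K (n - 1)).eval t • x - (S K (n - 2)).eval t • (1 : R) := by
  induction n with
  | zero => simp
  | succ n ih =>
    have hS : S K ((n + 1 : ℕ) - 1) = X * S K (n - 1) - S K (n - 2) := by
      rw [S_eq]; push_cast; ring_nf
    rw [pow_succ, ih, sub_mul, smul_mul_assoc, hx, smul_mul_assoc, one_mul, hS]
    simp only [eval_sub, eval_mul, eval_X]
    push_cast
    rw [show (n : ℤ) + 1 - 2 = n - 1 by ring]
    module

end Polynomial.Chebyshev

open Polynomial.Chebyshev in
theorem norm_pow_le_of_mul_self_eq {R : Type*} [NormedRing R] [NormedAlgebra ℝ R] [NormOneClass R]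
    {x : R} {t : ℝ} (ht : |t| ≤ 2) (hx : x * x = t • x - 1) (n : ℕ) :
    ‖x ^ n‖ ≤ (n + 1) * (‖x‖ + 1) := by
  rw [pow_eq_eval_S_smul_sub hx]
  have h₁ : |(S ℝ (n - 1)).eval t| ≤ n := by simpa using abs_eval_S_le ht (n := n - 1) (by omega)
  have h₂ : |(S ℝ (n - 2)).eval t| ≤ n + 1 := by
    rcases n with _ | n
    · simp
    · have := abs_eval_S_le ht (n := (n + 1 : ℕ) - 2) (by omega)
      push_cast at this ⊢
      linarith
  calc _ ≤ ‖(S ℝ (n - 1)).eval t • x‖ + ‖(S ℝ (n - 2)).eval t • (1 : R)‖ := norm_sub_le _ _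
    _ = |(S ℝ (n - 1)).eval t| * ‖x‖ + |(S ℝ (n - 2)).eval t| := by
      rw [norm_smul, norm_smul, norm_one, mul_one, Real.norm_eq_abs, Real.norm_eq_abs]
    _ ≤ (n + 1) * ‖x‖ + (n + 1) := by gcongr; linarith
    _ = (n + 1) * (‖x‖ + 1) := by ring

theorem Matrix.mul_self_eq_trace_smul_sub_det_smul {R : Type*} [CommRing R]
    (M : Matrix (Fin 2) (Fin 2) R) : M * M = M.trace • M - M.det • 1 := by
  nontriviality R
  have hCH := M.aeval_self_charpoly
  rw [charpoly_fin_two] at hCH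
  simp only [map_add, map_sub, map_mul, aeval_X, aeval_C, Algebra.algebraMap_eq_smul_one,
    smul_mul_assoc, one_mul, sq] at hCH
  rw [← sub_eq_zero, ← hCH]
  abel

theorem eventually_mul_add_one_lt_mul_pow {c r : ℝ} (hc : 0 < c) (hr : 1 < r) (K : ℝ) :
    ∀ᶠ n : ℕ in atTop, K * (n + 1) < c * r ^ n := by
  have hr₀ : 0 < r := zero_lt_one.trans hr
  have hlinear : (fun n : ℕ ↦ K / c * ((n : ℝ) + 1)) =o[atTop] fun n ↦ r ^ n :=
    ((isLittleO_coe_const_pow_of_one_lt hr).add ((isLittleO_one_left_iff ℝ).2 <| by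
      simpa [abs_of_pos hr₀] using tendsto_pow_atTop_atTop_of_one_lt hr)).const_mul_left _
  filter_upwards [hlinear.eventuallyLT_norm_of_eventually_pos
    (.of_forall fun n ↦ norm_pos_iff.2 (pow_ne_zero n hr₀.ne'))] with n hn
  calc K * (n + 1) = c * (K / c * (n + 1)) := by field_simp
    _ ≤ c * ‖K / c * ((n : ℝ) + 1)‖ := by gcongr; exact Real.le_norm_self _
    _ < c * ‖r ^ n‖ := by gcongr
    _ = c * r ^ n := by rw [Real.norm_of_nonneg (by positivity)]

theorem Subsemigroup.exists_list_of_mem_closure {M : Type*} [Monoid M] {s : Set M} {x : M}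
    (hx : x ∈ closure s) : ∃ l : List M, l ≠ [] ∧ (∀ y ∈ l, y ∈ s) ∧ l.prod = x := by
  induction hx using closure_induction with
  | mem x hx => exact ⟨[x], by simp, by simpa, by simp⟩
  | mul x y _ _ ihx ihy =>
    obtain ⟨l₁, hl₁, hl₁s, rfl⟩ := ihx
    obtain ⟨l₂, -, hl₂s, rfl⟩ := ihy
    exact ⟨l₁ ++ l₂, by simp [hl₁], by simpa [or_imp, forall_and] using ⟨hl₁s, hl₂s⟩, by simp⟩

/-- `xⁿ` is the product of the word `lⁿ` of length `n * l.length ≥ n`, where `l` spells `x`. -/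
theorem mul_pow_le_of_mem_closure {M : Type*} [Monoid M] {s : Set M} (f : M → ℝ) {c r : ℝ}
    (hc : 0 ≤ c) (hr : 1 ≤ r)
    (h : ∀ l : List M, l ≠ [] → (∀ y ∈ l, y ∈ s) → f l.prod ≥ c * r ^ l.length)
    {x : M} (hx : x ∈ Subsemigroup.closure s) {n : ℕ} (hn : n ≠ 0) : c * r ^ n ≤ f (x ^ n) := by
  obtain ⟨l, hl, hls, rfl⟩ := Subsemigroup.exists_list_of_mem_closure hx
  have hword := h (List.replicate n l).flatten (by simp [hl, hn])
    (by simpa using fun y _ hy ↦ hls y hy)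
  rw [List.prod_flatten, List.map_replicate, List.prod_replicate, List.length_flatten,
    List.map_replicate, List.sum_replicate, smul_eq_mul] at hword
  refine le_trans ?_ hword
  gcongr
  exact Nat.le_mul_of_pos_right n (List.length_pos_iff.2 hl)

open scoped Matrix.Norms.L2Operator

theorem matNorm_eq_norm (M : Matrix (Fin 2) (Fin 2) ℝ) : matNorm M = ‖M‖ := rfl

theorem stmt8_general (S : Set SL2)
    (huh : ∃ lam : ℝ, 1 < lam ∧ ∃ c : ℝ, 0 < c ∧
      ∀ l : List SL2, l ≠ [] → (∀ x ∈ l, x ∈ S) →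
        matNorm ((l.prod : SL2) : Matrix (Fin 2) (Fin 2) ℝ) ≥ c * lam ^ l.length) :
    ∀ A : SL2, A ∈ Subsemigroup.closure S →
      |Matrix.trace ((A : SL2) : Matrix (Fin 2) (Fin 2) ℝ)| > 2 := by
  obtain ⟨lam, hlam, c, hc, hgrowth⟩ := huh
  intro A hA
  by_contra! htr
  set M : Matrix (Fin 2) (Fin 2) ℝ := (A : Matrix (Fin 2) (Fin 2) ℝ)
  have hCH : M * M = M.trace • M - 1 := by
    simpa [M, A.det_coe] using M.mul_self_eq_trace_smul_sub_det_smul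
  obtain ⟨n, hlt, hn⟩ :=
    ((eventually_mul_add_one_lt_mul_pow hc hlam (‖M‖ + 1)).and (eventually_ne_atTop 0)).exists
  have hlower : c * lam ^ n ≤ ‖M ^ n‖ := by
    simpa [M, matNorm_eq_norm] using
      mul_pow_le_of_mem_closure (fun B : SL2 ↦ matNorm B) hc.le hlam.le hgrowth hA hn
  have hupper := norm_pow_le_of_mul_self_eq htr hCH n
  linarith

/-- Every element of the semigroup generated by a finite uniformly hyperbolic set
`𝒜 ⊆ SL(2,ℝ)` is hyperbolic: `|tr A| > 2`. -/
theorem stmt8 (S : Set SL2) (hfin : S.Finite)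
    (huh : ∃ lam : ℝ, 1 < lam ∧ ∃ c : ℝ, 0 < c ∧
      ∀ l : List SL2, l ≠ [] → (∀ x ∈ l, x ∈ S) →
        matNorm ((l.prod : SL2) : Matrix (Fin 2) (Fin 2) ℝ) ≥ c * lam ^ l.length) :
    ∀ A : SL2, A ∈ Subsemigroup.closure S →
      |Matrix.trace ((A : SL2) : Matrix (Fin 2) (Fin 2) ℝ)| > 2 :=
  stmt8_general S huh
end

section
/- Let 𝒜 = {A₀} ∪ 𝒟 be a finite subset of SL(2,ℝ) generating a free semigroup, and let 𝒜_∞ = {A₀ B : B ∈ 𝒟*} ∪ {A₀}, where 𝒟* is the semigroup generated by 𝒟 = 𝒜 \ {A₀}. Then the zeta functions satisfy ζ_𝒜(s) ≤ (1 + ‖A₀‖^{2s})·ζ_{𝒜_∞}(s) for all s > 0, and consequently the critical exponents satisfy δ_𝒜 = δ_{𝒜_∞}. -/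
open Matrix

/-!
Prefixing `A₀` to a word over `𝒜` and cutting the result before each `A₀` factors it uniquely
into letters of `𝒜_∞`; since `‖w‖ ≥ ‖A₀‖⁻¹ ‖A₀ w‖`, this gives `ζ_𝒜(s) ≤ ‖A₀‖^{2s} ζ_{𝒜_∞}(s)`.
Conversely, spelling out words over `𝒜_∞` is injective into words over `𝒜`, so
`ζ_{𝒜_∞} ≤ ζ_𝒜`. Hence both zeta functions are finite for the same `s`.
-/

open scoped Matrix.Norms.L2Operator

lemma matNorm_mul_le (A B : Matrix (Fin 2) (Fin 2) ℝ) :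
    matNorm (A * B) ≤ matNorm A * matNorm B :=
  Matrix.l2_opNorm_mul A B

lemma matNorm_pos (P : SL2) : 0 < matNorm (P : Matrix (Fin 2) (Fin 2) ℝ) := by
  show 0 < ‖(P : Matrix (Fin 2) (Fin 2) ℝ)‖
  rw [norm_pos_iff]
  intro h
  simpa [h] using P.2

lemma rpow_neg_le_rpow_mul_rpow_neg {a x y s : ℝ} (ha : 0 < a) (hx : 0 ≤ x) (hs : 0 ≤ s)
    (hy : y ≤ a * x) (hy₀ : 0 < y) : x ^ (-s) ≤ a ^ s * y ^ (-s) :=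
  calc x ^ (-s) = a ^ s * (a * x) ^ (-s) := by
        rw [Real.mul_rpow ha.le hx, ← mul_assoc, ← Real.rpow_add ha, add_neg_cancel,
          Real.rpow_zero, one_mul]
    _ ≤ a ^ s * y ^ (-s) :=
        mul_le_mul_of_nonneg_left (Real.rpow_le_rpow_of_nonpos hy₀ hy (neg_nonpos.mpr hs))
          (Real.rpow_nonneg ha.le s)

lemma matNorm_rpow_neg_le (P Q : SL2) {s : ℝ} (hs : 0 ≤ s) :
    matNorm (Q : Matrix (Fin 2) (Fin 2) ℝ) ^ (-s) ≤
      matNorm (P : Matrix (Fin 2) (Fin 2) ℝ) ^ s *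
        matNorm ((P * Q : SL2) : Matrix (Fin 2) (Fin 2) ℝ) ^ (-s) :=
  rpow_neg_le_rpow_mul_rpow_neg (matNorm_pos P) (matNorm_pos Q).le hs
    (matNorm_mul_le _ _) (matNorm_pos (P * Q))

section Words

variable {ι κ : Type*}

@[simp] lemma wordProd_cons (A : ι → SL2) (i : ι) (l : List ι) :
    wordProd A (i :: l) = A i * wordProd A l := by
  simp [wordProd]

@[simp] lemma wordProd_append (A : ι → SL2) (l₁ l₂ : List ι) :
    wordProd A (l₁ ++ l₂) = wordProd A l₁ * wordProd A l₂ := by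
  simp [wordProd]

/-- Spelling out a word over `𝒜_∞` as a word over `𝒜`: the letter `D` becomes `A₀ D`,
with `none` standing for `A₀`. -/
def expandWord (L : List (List ι)) : List (Option ι) :=
  L.flatMap fun D => none :: D.map some

@[simp] lemma expandWord_cons (D : List ι) (L : List (List ι)) :
    expandWord (D :: L) = none :: (D.map some ++ expandWord L) := rfl

/-- Cuts a word over `𝒜` at each occurrence of `A₀`: the letters before the first `A₀`,
and the word over `𝒜_∞` formed by the rest. -/
def parseWord : List (Option ι) → List ι × List (List ι)
  | [] => ([], [])
  | none :: w => ([], (parseWord w).1 :: (parseWord w).2)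
  | some i :: w => (i :: (parseWord w).1, (parseWord w).2)

lemma map_some_append_expandWord_parseWord (w : List (Option ι)) :
    (parseWord w).1.map some ++ expandWord (parseWord w).2 = w := by
  induction w with
  | nil => rfl
  | cons o w ih => cases o <;> simp [parseWord, ih]

lemma parseWord_map_some_append (D : List ι) (w : List (Option ι)) :
    parseWord (D.map some ++ w) = (D ++ (parseWord w).1, (parseWord w).2) := by
  induction D with
  | nil => rfl
  | cons i D ih => simp [parseWord, ih]

lemma parseWord_expandWord (L : List (List ι)) : parseWord (expandWord L) = ([], L) := by
  induction L with
  | nil => rfl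
  | cons D L ih => simp [parseWord, parseWord_map_some_append, ih]

lemma expandWord_ne_nil {L : List (List ι)} (hL : L ≠ []) : expandWord L ≠ [] := by
  obtain ⟨D, L, rfl⟩ := List.exists_cons_of_ne_nil hL
  simp

lemma expandWord_injective : Function.Injective (expandWord (ι := ι)) := fun L₁ L₂ h => by
  simpa [parseWord_expandWord] using congrArg parseWord h

lemma expandWord_cons_parseWord (w : List (Option ι)) :
    expandWord ((parseWord w).1 :: (parseWord w).2) = none :: w := by
  rw [expandWord_cons, map_some_append_expandWord_parseWord]

lemma wordProd_expandWord (A₀ : SL2) (d : ι → SL2) (L : List (List ι)) :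
    wordProd (fun o : Option ι => o.elim A₀ d) (expandWord L) =
      wordProd (fun D : List ι => A₀ * wordProd d D) L := by
  induction L with
  | nil => rfl
  | cons D L ih =>
    have hD : wordProd (fun o : Option ι => o.elim A₀ d) (D.map some) = wordProd d D := by
      simp [wordProd, Function.comp_def]
    rw [expandWord_cons, wordProd_cons, wordProd_append, ih, hD, wordProd_cons, mul_assoc]
    rfl

lemma zeta_le_mul_zeta_of_injective (A : ι → SL2) (B : κ → SL2) {s : ℝ} (c : ENNReal)
    (g : {l : List ι // l ≠ []} → {l : List κ // l ≠ []}) (hg : Function.Injective g)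
    (h : ∀ l, ENNReal.ofReal (matNorm (wordProd A l.1) ^ (-2 * s)) ≤
      c * ENNReal.ofReal (matNorm (wordProd B (g l).1) ^ (-2 * s))) :
    zeta A s ≤ c * zeta B s :=
  calc zeta A s
      ≤ ∑' l, c * ENNReal.ofReal (matNorm (wordProd B (g l).1) ^ (-2 * s)) :=
        ENNReal.tsum_le_tsum h
    _ ≤ c * zeta B s := by
        rw [ENNReal.tsum_mul_left, zeta]
        gcongr
        exact ENNReal.tsum_comp_le_tsum_of_injective hg
          fun l => ENNReal.ofReal (matNorm (wordProd B l.1) ^ (-2 * s))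

lemma zeta_induced_le_zeta (A₀ : SL2) (d : ι → SL2) (s : ℝ) :
    zeta (fun D : List ι => A₀ * wordProd d D) s ≤ zeta (fun o : Option ι => o.elim A₀ d) s := by
  simpa using zeta_le_mul_zeta_of_injective _ _ 1
    (fun L => ⟨expandWord L.1, expandWord_ne_nil L.2⟩)
    (fun L₁ L₂ h => Subtype.ext (expandWord_injective (congrArg Subtype.val h)))
    (fun L => by rw [wordProd_expandWord, one_mul])

lemma zeta_le_rpow_mul_zeta_induced (A₀ : SL2) (d : ι → SL2) {s : ℝ} (hs : 0 ≤ s) :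
    zeta (fun o : Option ι => o.elim A₀ d) s ≤
      ENNReal.ofReal (matNorm (A₀ : Matrix (Fin 2) (Fin 2) ℝ) ^ (2 * s)) *
        zeta (fun D : List ι => A₀ * wordProd d D) s := by
  refine zeta_le_mul_zeta_of_injective _ _ _
    (fun w => ⟨(parseWord w.1).1 :: (parseWord w.1).2, List.cons_ne_nil _ _⟩)
    (fun w₁ w₂ h => Subtype.ext ?_) (fun w => ?_)
  · have h' := congrArg (fun L => expandWord L.1) h
    dsimp only at h'
    rw [expandWord_cons_parseWord, expandWord_cons_parseWord] at h'
    exact List.cons_injective h'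
  · rw [← wordProd_expandWord, expandWord_cons_parseWord, wordProd_cons, Option.elim_none,
      ← ENNReal.ofReal_mul (Real.rpow_nonneg (matNorm_pos A₀).le _), ← neg_mul_eq_neg_mul]
    exact ENNReal.ofReal_le_ofReal (matNorm_rpow_neg_le _ _ (by positivity))

end Words

lemma deltaOf_eq_of_zeta_lt_top_iff {ι κ : Type*} (A : ι → SL2) (B : κ → SL2)
    (h : ∀ s, 0 < s → (zeta A s < ⊤ ↔ zeta B s < ⊤)) : deltaOf A = deltaOf B := by
  have hdom : (fun s => 0 < s ∧ zeta A s < ⊤) = (fun s => 0 < s ∧ zeta B s < ⊤) :=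
    funext fun s => propext (and_congr_right (h s))
  unfold deltaOf
  rw [hdom]

theorem stmt17_general {ι : Type*} (A₀ : SL2) (d : ι → SL2) :
    (∀ s : ℝ, 0 < s →
      zeta (fun o : Option ι => o.elim A₀ d) s ≤
        ENNReal.ofReal (1 + matNorm ((A₀ : SL2) : Matrix (Fin 2) (Fin 2) ℝ) ^ (2 * s)) *
          zeta (fun l : List ι => A₀ * wordProd d l) s) ∧
    deltaOf (fun o : Option ι => o.elim A₀ d) =
      deltaOf (fun l : List ι => A₀ * wordProd d l) := by
  have hzeta : ∀ s : ℝ, 0 < s →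
      zeta (fun o : Option ι => o.elim A₀ d) s ≤
        ENNReal.ofReal (1 + matNorm ((A₀ : SL2) : Matrix (Fin 2) (Fin 2) ℝ) ^ (2 * s)) *
          zeta (fun l : List ι => A₀ * wordProd d l) s := fun s hs =>
    (zeta_le_rpow_mul_zeta_induced A₀ d hs.le).trans
      (by gcongr; exact le_add_of_nonneg_left zero_le_one)
  refine ⟨hzeta, deltaOf_eq_of_zeta_lt_top_iff _ _ fun s hs => ⟨fun h => ?_, fun h => ?_⟩⟩
  · exact (zeta_induced_le_zeta A₀ d s).trans_lt h
  · exact (hzeta s hs).trans_lt (ENNReal.mul_lt_top ENNReal.ofReal_lt_top h)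

/-- For `𝒜 = {A₀} ∪ 𝒟` generating a free semigroup and
`𝒜_∞ = {A₀B : B ∈ 𝒟*} ∪ {A₀}` (alphabet: words over `𝒟`, the letter `l` standing for
`A₀ · (product of 𝒟 over l)`): `ζ_𝒜(s) ≤ (1 + ‖A₀‖^{2s}) ζ_{𝒜_∞}(s)` for all `s > 0`,
and `δ_𝒜 = δ_{𝒜_∞}`. -/
theorem stmt17 {ι : Type*} [Fintype ι] (A₀ : SL2) (d : ι → SL2)
    (hfree : Function.Injective (fun l : {l : List (Option ι) // l ≠ []} =>
      wordProd (fun o : Option ι => o.elim A₀ d) l.1)) :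
    (∀ s : ℝ, 0 < s →
      zeta (fun o : Option ι => o.elim A₀ d) s ≤
        ENNReal.ofReal (1 + matNorm ((A₀ : SL2) : Matrix (Fin 2) (Fin 2) ℝ) ^ (2 * s)) *
          zeta (fun l : List ι => A₀ * wordProd d l) s) ∧
    deltaOf (fun o : Option ι => o.elim A₀ d) =
      deltaOf (fun l : List ι => A₀ * wordProd d l) :=
  stmt17_general A₀ d
end
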